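/- If a graph G has a vertex x with γ(G − x) ≥ γ(G), then b(G) ≤ deg(x); in particular b(G) ≤ Δ(G). -/

import Mathlib

open SimpleGraph

variable {V : Type*}

/-- `S` is a dominating set of `G`: every vertex is in `S` or has a neighbor in `S`. -/
def SimpleGraph.IsDomSet (G : SimpleGraph V) (S : Finset V) : Prop :=
  ∀ v : V, v ∈ S ∨ ∃ u ∈ S, G.Adj u v

/-- The domination number of a finite graph. -/
noncomputable def SimpleGraph.domNum [Fintype V] (G : SimpleGraph V) : ℕ :=
  sInf {n | ∃ S : Finset V, S.card = n ∧ G.IsDomSet S}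

/-- The bondage number: the minimum size of a set of edges of `G` whose removal
increases the domination number. -/
noncomputable def SimpleGraph.bondageNum [Fintype V] (G : SimpleGraph V) : ℕ :=
  sInf {n | ∃ B : Finset (Sym2 V), B.card = n ∧ ↑B ⊆ G.edgeSet ∧
    G.domNum < (G.deleteEdges ↑B).domNum}

/-!
Delete every edge at `x`. In the resulting graph `x` is isolated, so it lies in every dominating
set, and the other vertices of a minimum dominating set dominate `G - x`. Hence the domination
number after the deletion is at least `γ(G - x) + 1 ≥ γ(G) + 1`, so these `deg x` edges witness
`b(G) ≤ deg x`.
-/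

namespace SimpleGraph

section domNum

variable [Fintype V] {G : SimpleGraph V}

lemma domNum_le_card {S : Finset V} (hS : G.IsDomSet S) : G.domNum ≤ S.card :=
  Nat.sInf_le ⟨S, rfl, hS⟩

variable (G) in
lemma exists_isDomSet_card_eq_domNum : ∃ S : Finset V, S.card = G.domNum ∧ G.IsDomSet S :=
  Nat.sInf_mem (s := {n | ∃ S : Finset V, S.card = n ∧ G.IsDomSet S})
    ⟨_, Finset.univ, rfl, fun v => Or.inl (Finset.mem_univ v)⟩

lemma bondageNum_le_card {B : Finset (Sym2 V)} (hB : ↑B ⊆ G.edgeSet)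
    (hlt : G.domNum < (G.deleteEdges ↑B).domNum) : G.bondageNum ≤ B.card :=
  Nat.sInf_le ⟨B, rfl, hB, hlt⟩

end domNum

lemma IsDomSet.mem_of_forall_not_adj {G : SimpleGraph V} {S : Finset V} {x : V}
    (hS : G.IsDomSet S) (hx : ∀ u, ¬ G.Adj u x) : x ∈ S :=
  (hS x).resolve_right fun ⟨u, _, hux⟩ => hx u hux

lemma deleteEdges_incidenceSet_adj {G : SimpleGraph V} {x u v : V} :
    (G.deleteEdges (G.incidenceSet x)).Adj u v ↔ G.Adj u v ∧ u ≠ x ∧ v ≠ x := by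
  rw [deleteEdges_adj, mk'_mem_incidenceSet_iff]
  tauto

lemma domNum_induce_ne_lt_domNum_deleteEdges [Fintype V] [DecidableEq V] (G : SimpleGraph V)
    (x : V) :
    (G.induce {v | v ≠ x}).domNum < (G.deleteEdges (G.incidenceSet x)).domNum := by
  obtain ⟨S, hcard, hS⟩ := exists_isDomSet_card_eq_domNum (G.deleteEdges (G.incidenceSet x))
  have hxS : x ∈ S := hS.mem_of_forall_not_adj fun u hux =>
    (deleteEdges_incidenceSet_adj.1 hux).2.2 rfl
  have hdom : (G.induce {v | v ≠ x}).IsDomSet (S.subtype (· ≠ x)) := by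
    rintro ⟨v, hvx : v ≠ x⟩
    simp only [Finset.mem_subtype]
    refine (hS v).imp id fun ⟨u, huS, huv⟩ => ?_
    obtain ⟨huv, hux, -⟩ := deleteEdges_incidenceSet_adj.1 huv
    exact ⟨⟨u, hux⟩, huS, huv⟩
  have hcard' : (S.subtype (· ≠ x)).card + 1 = S.card := by
    rw [Finset.card_subtype, Finset.filter_ne', Finset.card_erase_add_one hxS]
  calc (G.induce {v | v ≠ x}).domNum ≤ (S.subtype (· ≠ x)).card := domNum_le_card hdom
    _ < S.card := by omega
    _ = _ := hcard

end SimpleGraph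

theorem bondage_le_degree_of_domNum_delete_vertex_general [Fintype V] [DecidableEq V]
    (G : SimpleGraph V) [DecidableRel G.Adj] (x : V)
    (h : G.domNum ≤ (G.induce {v : V | v ≠ x}).domNum) :
    G.bondageNum ≤ G.degree x ∧ G.bondageNum ≤ G.maxDegree := by
  have hdeg : G.bondageNum ≤ G.degree x := by
    rw [← card_incidenceFinset_eq_degree]
    apply bondageNum_le_card <;> rw [coe_incidenceFinset]
    · exact G.incidenceSet_subset x
    · exact h.trans_lt (domNum_induce_ne_lt_domNum_deleteEdges G x)
  exact ⟨hdeg, hdeg.trans (G.degree_le_maxDegree x)⟩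

theorem bondage_le_degree_of_domNum_delete_vertex [Fintype V] [DecidableEq V]
    (G : SimpleGraph V) [DecidableRel G.Adj] (hE : G.edgeSet.Nonempty) (x : V)
    (hx : 0 < G.degree x)
    (h : G.domNum ≤ (G.induce {v : V | v ≠ x}).domNum) :
    G.bondageNum ≤ G.degree x ∧ G.bondageNum ≤ G.maxDegree :=
  bondage_le_degree_of_domNum_delete_vertex_general G x h
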